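/- arXiv:2004.04226 — 2 statements merged into one kernel-verified Lean document; each statement's English description precedes it below -/
import Mathlib

section
/- Let k ≥ 2 and suppose ℂ^k contains a SIC-POVM. Let a_1, a_2 ∈ ℂ^k be orthonormal vectors and let s = a_1 ⊗ a_2 + a_2 ⊗ a_1 ∈ ℂ^k ⊗ ℂ^k. Then for every real ε with 0 ≤ ε ≤ (k+1)/(12k), the matrix P_sym^{k,2} − ε·s s^* ∈ M_{k²}(ℂ) is separable. -/
open Matrix Finset
open scoped Kronecker

/-- The flip operator on ℂ^k ⊗ ℂ^k. -/
noncomputable def flipOp (k : ℕ) : Matrix (Fin k × Fin k) (Fin k × Fin k) ℂ :=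
  Matrix.of fun p q => if p.1 = q.2 ∧ p.2 = q.1 then 1 else 0

/-- Orthogonal projection onto the symmetric subspace of ℂ^k ⊗ ℂ^k. -/
noncomputable def psym (k : ℕ) : Matrix (Fin k × Fin k) (Fin k × Fin k) ℂ :=
  (1 / 2 : ℂ) • (1 + flipOp k)

/-- Separability of a matrix in M_k(ℂ) ⊗ M_k(ℂ) ≅ M_{k²}(ℂ). -/
def Separable {k : ℕ} (δ : Matrix (Fin k × Fin k) (Fin k × Fin k) ℂ) : Prop :=
  ∃ (N : ℕ) (x y : Fin N → Fin k → ℂ),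
    δ = ∑ i, (Matrix.vecMulVec (x i) (star (x i))) ⊗ₖ (Matrix.vecMulVec (y i) (star (y i)))

/-- ℂ^k contains a SIC-POVM: k² unit vectors with pairwise squared overlaps 1/(k+1). -/
def HasSICPOVM (k : ℕ) : Prop :=
  ∃ v : Fin (k ^ 2) → Fin k → ℂ,
    (∀ i, ∑ a, Complex.normSq (v i a) = 1) ∧
    ∀ i j, i ≠ j → ‖∑ a, star (v i a) * v j a‖ ^ 2 = 1 / ((k : ℝ) + 1)

/-!
A SIC-POVM `v₁, …, v_{k²}` is a complex projective 2-design: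
`P_sym = (k+1)/(2k) · ∑ᵢ (vᵢvᵢ*)^{⊗2}`, because the overlap conditions make the Hilbert–Schmidt
norm of the difference vanish. Rotating the SIC by a unitary that sends `v₁` to a unit vector `c`
then writes `P_sym - μ (cc*)^{⊗2}` as a nonnegative combination of product states whenever
`0 ≤ μ ≤ (k+1)/(2k)`.

For `b_j = a₁ + iʲ a₂` one has `b_j ⊗ b_j = a₁ ⊗ a₁ + iʲ s + i²ʲ a₂ ⊗ a₂`, and averaging over
`j = 0, 1, 2, 3` kills the cross terms:
`∑_j (b_j b_j*)^{⊗2} = 4 (ss* + (a₁a₁*)^{⊗2} + (a₂a₂*)^{⊗2})`.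
So `P_sym - ε ss*` is the average of the `P_sym - ε (b_j b_j*)^{⊗2}`, separable since
`‖b_j‖² = 2` and `4ε ≤ (k+1)/(2k)`, plus `ε (a₁a₁*)^{⊗2} + ε (a₂a₂*)^{⊗2}`.
-/

open scoped ComplexOrder

variable {k : ℕ} {n : Type*}

theorem flipOp_mul_self : flipOp k * flipOp k = 1 := by
  ext ⟨i, j⟩ ⟨i', j'⟩
  simp [flipOp, Matrix.mul_apply, Matrix.one_apply, Fintype.sum_prod_type, ite_and, Prod.ext_iff]

theorem conjTranspose_flipOp : (flipOp k)ᴴ = flipOp k := by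
  ext ⟨i, j⟩ ⟨i', j'⟩
  simp only [conjTranspose_apply, flipOp, of_apply]
  split_ifs <;> simp_all

theorem trace_flipOp : trace (flipOp k) = k := by
  simp only [trace, diag_apply, flipOp, of_apply, Fintype.sum_prod_type]
  simp [eq_comm]

theorem trace_kronecker_mul_flipOp (A B : Matrix (Fin k) (Fin k) ℂ) :
    trace ((A ⊗ₖ B) * flipOp k) = trace (A * B) := by
  simp [trace, Matrix.mul_apply, flipOp, Fintype.sum_prod_type, ite_and]

theorem psym_mul_self : psym k * psym k = psym k := by
  have : (1 + flipOp k) * (1 + flipOp k) = (2 : ℂ) • (1 + flipOp k) := by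
    rw [two_smul, add_mul, mul_add, mul_add, flipOp_mul_self, one_mul, one_mul, mul_one]; abel
  simp only [psym, smul_mul_smul_comm, this, smul_smul]
  norm_num

theorem isHermitian_psym : (psym k).IsHermitian := by
  simp [psym, IsHermitian, conjTranspose_flipOp]

theorem trace_psym : trace (psym k) = ((k : ℂ) ^ 2 + k) / 2 := by
  simp only [psym, one_div, smul_add, trace_add, trace_smul, trace_one, Fintype.card_prod,
    Fintype.card_fin, Nat.cast_mul, smul_eq_mul, trace_flipOp]
  ring

theorem trace_psym_mul_kronecker (A B : Matrix (Fin k) (Fin k) ℂ) :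
    trace (psym k * (A ⊗ₖ B)) = (trace A * trace B + trace (A * B)) / 2 := by
  rw [trace_mul_comm, psym, mul_smul_comm, mul_add, mul_one, trace_smul, trace_add,
    trace_kronecker, trace_kronecker_mul_flipOp, smul_eq_mul]
  ring

noncomputable def outerSq (x : n → ℂ) : Matrix (n × n) (n × n) ℂ :=
  vecMulVec x (star x) ⊗ₖ vecMulVec x (star x)

theorem trace_vecMulVec_star_mul [Fintype n] (x y : n → ℂ) :
    trace (vecMulVec x (star x) * vecMulVec y (star y)) = (star x ⬝ᵥ y) * (star y ⬝ᵥ x) := by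
  rw [vecMulVec_mul_vecMulVec, trace_vecMulVec, dotProduct_smul, smul_eq_mul, dotProduct_comm x]

theorem conjTranspose_outerSq (x : n → ℂ) : (outerSq x)ᴴ = outerSq x := by
  simp [outerSq, conjTranspose_kronecker, conjTranspose_vecMulVec]

theorem trace_outerSq_mul_outerSq [Fintype n] (x y : n → ℂ) :
    trace (outerSq x * outerSq y) = ((star x ⬝ᵥ y) * (star y ⬝ᵥ x)) ^ 2 := by
  rw [outerSq, outerSq, ← mul_kronecker_mul, trace_kronecker, trace_vecMulVec_star_mul, sq]

theorem trace_psym_mul_outerSq (x : Fin k → ℂ) :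
    trace (psym k * outerSq x) = (star x ⬝ᵥ x) ^ 2 := by
  rw [outerSq, trace_psym_mul_kronecker, trace_vecMulVec_star_mul, trace_vecMulVec,
    dotProduct_comm x]
  ring

theorem trace_sum_outerSq_mul_self {ι : Type*} [Fintype ι] [Fintype n] (v : ι → n → ℂ) {c : ℂ}
    (hnorm : ∀ i, star (v i) ⬝ᵥ v i = 1)
    (hover : ∀ i j, i ≠ j → (star (v i) ⬝ᵥ v j) * (star (v j) ⬝ᵥ v i) = c) :
    trace ((∑ i, outerSq (v i)) * ∑ i, outerSq (v i))
      = Fintype.card ι + ((Fintype.card ι : ℂ) ^ 2 - Fintype.card ι) * c ^ 2 := by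
  classical
  have hgram (i j : ι) : ((star (v i) ⬝ᵥ v j) * (star (v j) ⬝ᵥ v i)) ^ 2
      = c ^ 2 + if i = j then 1 - c ^ 2 else 0 := by
    split_ifs with h
    · simp [h, hnorm]
    · simp [hover i j h]
  simp only [sum_mul_sum, trace_sum, trace_outerSq_mul_outerSq, hgram, sum_add_distrib,
    sum_ite_eq, mem_univ, if_true, sum_const, card_univ, nsmul_eq_mul]
  ring

theorem psym_eq_smul_sum_outerSq {ι : Type*} [Fintype ι] (v : ι → Fin k → ℂ)
    (hcard : Fintype.card ι = k ^ 2)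
    (hnorm : ∀ i, star (v i) ⬝ᵥ v i = 1)
    (hover : ∀ i j, i ≠ j → (star (v i) ⬝ᵥ v j) * (star (v j) ⬝ᵥ v i) = 1 / ((k : ℂ) + 1)) :
    psym k = ((((k : ℝ) + 1) / (2 * k) : ℝ) : ℂ) • ∑ i, outerSq (v i) := by
  rcases k.eq_zero_or_pos with rfl | hk
  · exact Subsingleton.elim _ _
  set κ : ℂ := ((((k : ℝ) + 1) / (2 * k) : ℝ) : ℂ)
  set S := ∑ i, outerSq (v i)
  have hPS : trace (psym k * S) = (k : ℂ) ^ 2 := by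
    simp [S, mul_sum, trace_sum, trace_psym_mul_outerSq, hnorm, hcard]
  have hSP : trace (S * psym k) = (k : ℂ) ^ 2 := by rw [trace_mul_comm, hPS]
  have hSS : trace (S * S) = _ := trace_sum_outerSq_mul_self v hnorm hover
  have hherm : (psym k - κ • S)ᴴ = psym k - κ • S := by
    simp [κ, S, conjTranspose_sum, conjTranspose_outerSq, isHermitian_psym.eq]
  have hzero : trace ((psym k - κ • S)ᴴ * (psym k - κ • S)) = 0 := by
    rw [hherm]
    simp only [sub_mul, mul_sub, smul_mul_assoc, mul_smul_comm, trace_sub, trace_smul,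
      smul_eq_mul, psym_mul_self, trace_psym, hPS, hSP, hSS, hcard, κ]
    have : (k : ℂ) ≠ 0 := by exact_mod_cast hk.ne'
    push_cast
    field_simp
    ring
  exact sub_eq_zero.mp (trace_conjTranspose_mul_self_eq_zero_iff.mp hzero)

theorem star_dotProduct_self_eq_sum_normSq [Fintype n] (x : n → ℂ) :
    star x ⬝ᵥ x = ((∑ a, Complex.normSq (x a) : ℝ) : ℂ) := by
  push_cast
  simp [dotProduct, Complex.normSq_eq_conj_mul_self]

theorem star_dotProduct_mul_star_dotProduct [Fintype n] (x y : n → ℂ) :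
    (star x ⬝ᵥ y) * (star y ⬝ᵥ x) = ((‖star x ⬝ᵥ y‖ ^ 2 : ℝ) : ℂ) := by
  rw [star_dotProduct y, Complex.star_def, Complex.mul_conj']
  push_cast; rfl

theorem HasSICPOVM.exists_star_dotProduct (h : HasSICPOVM k) : ∃ v : Fin (k ^ 2) → Fin k → ℂ,
    (∀ i, star (v i) ⬝ᵥ v i = 1) ∧
    ∀ i j, i ≠ j → (star (v i) ⬝ᵥ v j) * (star (v j) ⬝ᵥ v i) = 1 / ((k : ℂ) + 1) := by
  obtain ⟨v, hnorm, hover⟩ := h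
  refine ⟨v, fun i => ?_, fun i j hij => ?_⟩
  · simp [star_dotProduct_self_eq_sum_normSq, hnorm]
  · rw [star_dotProduct_mul_star_dotProduct]
    exact congrArg Complex.ofReal (hover i j hij) |>.trans (by push_cast; rfl)

theorem exists_linearIsometryEquiv_apply_eq {𝕜 E : Type*} [RCLike 𝕜] [NormedAddCommGroup E]
    [InnerProductSpace 𝕜 E] [FiniteDimensional 𝕜 E] {u c : E} (hu : ‖u‖ = 1) (hc : ‖c‖ = 1) :
    ∃ T : E ≃ₗᵢ[𝕜] E, T u = c := by
  have : Nontrivial E := ⟨u, 0, ne_zero_of_norm_ne_zero (by simp [hu])⟩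
  let i₀ : Fin (Module.finrank 𝕜 E) := ⟨0, Module.finrank_pos⟩
  have hext (x : E) (hx : ‖x‖ = 1) : ∃ b : OrthonormalBasis (Fin (Module.finrank 𝕜 E)) 𝕜 E,
      b i₀ = x := by
    obtain ⟨b, hb⟩ := Orthonormal.exists_orthonormalBasis_extension_of_card_eq (𝕜 := 𝕜)
      (v := fun _ => x) (s := {i₀}) (by simp) (orthonormal_subsingleton_iff.mpr fun _ => hx)
    exact ⟨b, hb i₀ rfl⟩
  obtain ⟨bu, rfl⟩ := hext u hu
  obtain ⟨bc, rfl⟩ := hext c hc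
  exact ⟨bu.equiv bc (Equiv.refl _), by simp⟩

theorem norm_toLp_eq_one [Fintype n] {x : n → ℂ} (hx : star x ⬝ᵥ x = 1) :
    ‖WithLp.toLp 2 x‖ = 1 := by
  have h : ‖WithLp.toLp 2 x‖ ^ 2 = 1 := by
    rw [norm_sq_eq_re_inner (𝕜 := ℂ), EuclideanSpace.inner_toLp_toLp, dotProduct_comm, hx,
      RCLike.one_re]
  exact (pow_eq_one_iff_of_nonneg (norm_nonneg _) two_ne_zero).mp h

theorem star_dotProduct_ofLp_map [Fintype n]
    (T : EuclideanSpace ℂ n ≃ₗᵢ[ℂ] EuclideanSpace ℂ n) (x y : n → ℂ) :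
    star (T (WithLp.toLp 2 x)).ofLp ⬝ᵥ (T (WithLp.toLp 2 y)).ofLp = star x ⬝ᵥ y := by
  rw [dotProduct_comm, ← EuclideanSpace.inner_eq_star_dotProduct, T.inner_map_map,
    EuclideanSpace.inner_toLp_toLp, dotProduct_comm]

theorem vecMulVec_ofReal_smul (t : ℝ) (x : n → ℂ) :
    vecMulVec ((t : ℂ) • x) (star ((t : ℂ) • x)) = ((t ^ 2 : ℝ) : ℂ) • vecMulVec x (star x) := by
  rw [star_smul, smul_vecMulVec, vecMulVec_smul, smul_smul, Complex.star_def, Complex.conj_ofReal]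
  push_cast; ring_nf

theorem outerSq_ofReal_smul (t : ℝ) (x : n → ℂ) :
    outerSq ((t : ℂ) • x) = ((t ^ 4 : ℝ) : ℂ) • outerSq x := by
  rw [outerSq, vecMulVec_ofReal_smul, smul_kronecker, kronecker_smul, smul_smul, outerSq]
  push_cast; ring_nf

theorem separable_zero : Separable (0 : Matrix (Fin k × Fin k) (Fin k × Fin k) ℂ) :=
  ⟨0, Fin.elim0, Fin.elim0, by simp⟩

theorem separable_outerSq (x : Fin k → ℂ) : Separable (outerSq x) :=
  ⟨1, fun _ => x, fun _ => x, by simp [outerSq]⟩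

theorem Separable.add {A B : Matrix (Fin k × Fin k) (Fin k × Fin k) ℂ}
    (hA : Separable A) (hB : Separable B) : Separable (A + B) := by
  obtain ⟨N, x, y, rfl⟩ := hA
  obtain ⟨N', x', y', rfl⟩ := hB
  exact ⟨N + N', Fin.append x x', Fin.append y y', by simp [Fin.sum_univ_add]⟩

theorem Separable.sum {ι : Type*} (s : Finset ι)
    {A : ι → Matrix (Fin k × Fin k) (Fin k × Fin k) ℂ}
    (h : ∀ i ∈ s, Separable (A i)) : Separable (∑ i ∈ s, A i) :=
  Finset.sum_induction _ _ (fun _ _ => Separable.add) separable_zero h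

theorem Separable.smul {A : Matrix (Fin k × Fin k) (Fin k × Fin k) ℂ} (h : Separable A) {r : ℝ}
    (hr : 0 ≤ r) : Separable ((r : ℂ) • A) := by
  obtain ⟨N, x, y, rfl⟩ := h
  refine ⟨N, fun i => (Real.sqrt r : ℂ) • x i, y, ?_⟩
  simp only [vecMulVec_ofReal_smul, Real.sq_sqrt hr, smul_kronecker, Finset.smul_sum]

theorem separable_psym_sub_smul_outerSq (hsic : HasSICPOVM k) {c : Fin k → ℂ}
    (hc : star c ⬝ᵥ c = 1) {μ : ℝ} (hμ0 : 0 ≤ μ) (hμ : μ ≤ ((k : ℝ) + 1) / (2 * k)) :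
    Separable (psym k - (μ : ℂ) • outerSq c) := by
  obtain ⟨v, hnorm, hover⟩ := hsic.exists_star_dotProduct
  have hk : k ≠ 0 := by rintro rfl; simp [dotProduct] at hc
  let i₀ : Fin (k ^ 2) := ⟨0, by positivity⟩
  obtain ⟨T, hT⟩ := exists_linearIsometryEquiv_apply_eq (𝕜 := ℂ)
    (norm_toLp_eq_one (hnorm i₀)) (norm_toLp_eq_one hc)
  set w : Fin (k ^ 2) → Fin k → ℂ := fun i => (T (WithLp.toLp 2 (v i))).ofLp
  have hw : psym k = ((((k : ℝ) + 1) / (2 * k) : ℝ) : ℂ) • ∑ i, outerSq (w i) :=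
    psym_eq_smul_sum_outerSq w (by simp) (by simpa only [w, star_dotProduct_ofLp_map] using hnorm)
      (by simpa only [w, star_dotProduct_ofLp_map] using hover)
  have hwc : w i₀ = c := by simp [w, hT]
  have hsplit : psym k - (μ : ℂ) • outerSq c
      = ∑ i, ((((k : ℝ) + 1) / (2 * k) - if i = i₀ then μ else 0 : ℝ) : ℂ) • outerSq (w i) := by
    simp [hw, ← hwc, sub_smul, sum_sub_distrib, smul_sum, ite_smul]
  rw [hsplit]
  refine Separable.sum _ fun i _ => (separable_outerSq (w i)).smul ?_
  have : 0 ≤ ((k : ℝ) + 1) / (2 * k) := by positivity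
  split_ifs <;> linarith

theorem separable_psym_sub_smul_outerSq_of_star_dotProduct_self (hsic : HasSICPOVM k)
    {b : Fin k → ℂ} {r : ℝ} (hr : 0 < r) (hb : star b ⬝ᵥ b = r) {μ : ℝ} (hμ0 : 0 ≤ μ)
    (hμ : μ * r ^ 2 ≤ ((k : ℝ) + 1) / (2 * k)) :
    Separable (psym k - (μ : ℂ) • outerSq b) := by
  set c : Fin k → ℂ := ((Real.sqrt r)⁻¹ : ℝ) • b
  have hbc : b = ((Real.sqrt r : ℝ) : ℂ) • c := by
    simp [c, smul_smul, (Real.sqrt_pos.mpr hr).ne']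
  have hc : star c ⬝ᵥ c = 1 := by
    rw [star_smul, smul_dotProduct, dotProduct_smul, hb, star_trivial, smul_smul,
      Complex.real_smul, ← Complex.ofReal_mul, ← mul_inv, Real.mul_self_sqrt hr.le,
      inv_mul_cancel₀ hr.ne', Complex.ofReal_one]
  have hpow : Real.sqrt r ^ 4 = r ^ 2 := by
    rw [show 4 = 2 * 2 by rfl, pow_mul, Real.sq_sqrt hr.le]
  rw [hbc, outerSq_ofReal_smul, smul_smul, ← Complex.ofReal_mul, hpow]
  exact separable_psym_sub_smul_outerSq hsic hc (by positivity) hμ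

def kronVec (x y : n → ℂ) : n × n → ℂ := fun p => x p.1 * y p.2

theorem vecMulVec_kronVec_self (x : n → ℂ) :
    vecMulVec (kronVec x x) (star (kronVec x x)) = outerSq x := by
  ext ⟨i, j⟩ ⟨i', j'⟩
  simp only [vecMulVec_apply, kronVec, Pi.star_apply, star_mul', outerSq, kroneckerMap_apply]
  ring

theorem kronVec_add_smul_self (x y : n → ℂ) (ω : ℂ) :
    kronVec (x + ω • y) (x + ω • y)
      = kronVec x x + ω • (kronVec x y + kronVec y x) + ω ^ 2 • kronVec y y := by
  ext p
  simp only [kronVec, Pi.add_apply, Pi.smul_apply, smul_eq_mul]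
  ring

theorem sum_vecMulVec_add_I_pow (u s t : n → ℂ) :
    ∑ j : Fin 4, vecMulVec (u + Complex.I ^ (j : ℕ) • s + (Complex.I ^ (j : ℕ)) ^ 2 • t)
        (star (u + Complex.I ^ (j : ℕ) • s + (Complex.I ^ (j : ℕ)) ^ 2 • t))
      = (4 : ℂ) • (vecMulVec u (star u) + vecMulVec s (star s) + vecMulVec t (star t)) := by
  ext p q
  simp only [pow_succ, pow_zero, one_mul, star_add, star_smul, star_pow, Complex.star_def,
    Complex.conj_I, star_mul', Fin.sum_univ_four, Fin.isValue, Fin.coe_ofNat_eq_mod, Nat.zero_mod,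
    one_smul, mul_one, Nat.one_mod, Complex.I_mul_I, neg_smul, mul_neg, neg_mul, neg_neg,
    Nat.reduceMod, Nat.mod_succ, Matrix.add_apply, vecMulVec_apply, Pi.add_apply, Pi.star_apply,
    Pi.smul_apply, smul_eq_mul, Pi.neg_apply, Matrix.smul_apply]
  ring_nf
  simp only [Complex.I_sq]
  ring

theorem star_dotProduct_add_smul_self [Fintype n] {x y : n → ℂ}
    (hx : star x ⬝ᵥ x = 1) (hy : star y ⬝ᵥ y = 1) (hxy : star x ⬝ᵥ y = 0) {ω : ℂ}
    (hω : ‖ω‖ = 1) : star (x + ω • y) ⬝ᵥ (x + ω • y) = 2 := by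
  have hyx : star y ⬝ᵥ x = 0 := by rw [star_dotProduct, hxy, star_zero]
  simp only [star_add, star_smul, add_dotProduct, dotProduct_add, smul_dotProduct, dotProduct_smul,
    hx, hy, hxy, hyx, smul_eq_mul, mul_zero, mul_one, add_zero, zero_add, Complex.star_def,
    Complex.mul_conj', hω]
  norm_num

theorem psym_minus_sym_pair_separable_sic_general (k : ℕ) (hsic : HasSICPOVM k)
    (a₁ a₂ : Fin k → ℂ)
    (ha₁ : ∑ i, Complex.normSq (a₁ i) = 1) (ha₂ : ∑ i, Complex.normSq (a₂ i) = 1)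
    (horth : ∑ i, star (a₁ i) * a₂ i = 0)
    (s : Fin k × Fin k → ℂ) (hs : ∀ p, s p = a₁ p.1 * a₂ p.2 + a₂ p.1 * a₁ p.2)
    (ε : ℝ) (hε0 : 0 ≤ ε) (hε : ε ≤ ((k : ℝ) + 1) / (12 * k)) :
    Separable (psym k - (ε : ℂ) • Matrix.vecMulVec s (star s)) := by
  set b : Fin 4 → Fin k → ℂ := fun j => a₁ + Complex.I ^ (j : ℕ) • a₂
  have hsum : ∑ j, outerSq (b j) = (4 : ℂ) • (outerSq a₁ + vecMulVec s (star s) + outerSq a₂) := by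
    have hs' : s = kronVec a₁ a₂ + kronVec a₂ a₁ := funext hs
    simp only [b, ← vecMulVec_kronVec_self, kronVec_add_smul_self, ← hs']
    exact sum_vecMulVec_add_I_pow _ _ _
  have hdecomp : psym k - (ε : ℂ) • vecMulVec s (star s)
      = ∑ j, ((1 / 4 : ℝ) : ℂ) • (psym k - (ε : ℂ) • outerSq (b j))
        + (ε : ℂ) • outerSq a₁ + (ε : ℂ) • outerSq a₂ := by
    simp only [smul_sub, sum_sub_distrib, smul_comm _ (ε : ℂ), ← smul_sum, hsum, sum_const,
      card_univ, Fintype.card_fin]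
    push_cast
    module
  have hb (j : Fin 4) : star (b j) ⬝ᵥ b j = (2 : ℝ) := by
    have h₁ : star a₁ ⬝ᵥ a₁ = 1 := by simp [star_dotProduct_self_eq_sum_normSq, ha₁]
    have h₂ : star a₂ ⬝ᵥ a₂ = 1 := by simp [star_dotProduct_self_eq_sum_normSq, ha₂]
    push_cast
    exact star_dotProduct_add_smul_self h₁ h₂ horth (by simp)
  have hε4 : ε * 2 ^ 2 ≤ ((k : ℝ) + 1) / (2 * k) := by
    have : 0 ≤ ((k : ℝ) + 1) / k := by positivity
    rw [mul_comm 12, ← div_div] at hε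
    rw [mul_comm 2, ← div_div]
    linarith
  rw [hdecomp]
  refine ((Separable.sum _ fun j _ => ?_).add ((separable_outerSq a₁).smul hε0)).add
    ((separable_outerSq a₂).smul hε0)
  exact (separable_psym_sub_smul_outerSq_of_star_dotProduct_self hsic two_pos (hb j) hε0 hε4).smul
    (by norm_num)

theorem psym_minus_sym_pair_separable_sic (k : ℕ) (hk : 2 ≤ k) (hsic : HasSICPOVM k)
    (a₁ a₂ : Fin k → ℂ)
    (ha₁ : ∑ i, Complex.normSq (a₁ i) = 1) (ha₂ : ∑ i, Complex.normSq (a₂ i) = 1)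
    (horth : ∑ i, star (a₁ i) * a₂ i = 0)
    (s : Fin k × Fin k → ℂ) (hs : ∀ p, s p = a₁ p.1 * a₂ p.2 + a₂ p.1 * a₁ p.2)
    (ε : ℝ) (hε0 : 0 ≤ ε) (hε : ε ≤ ((k : ℝ) + 1) / (12 * k)) :
    Separable (psym k - (ε : ℂ) • Matrix.vecMulVec s (star s)) :=
  psym_minus_sym_pair_separable_sic_general k hsic a₁ a₂ ha₁ ha₂ horth s hs ε hε0 hε
end

section
/- Let k ≥ 2 and let v ∈ ℂ^k ⊗ ℂ^k ≅ ℂ^{k²} be a unit antisymmetric vector. Then for every real ε with 0 ≤ ε ≤ 1, the matrix B = P_sym^{k,2} + ε·v v^* ∈ M_{k²}(ℂ) is positive under partial transpose (PPT): both B and its right partial transpose B^Γ are positive semidefinite. -/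
/-!
`B` is a sum of positive semidefinite matrices, since `psym = psymᴴ * psym`. For the partial
transpose, `Γ(1) = 1` and `Γ(F) = ω ω^*` with `ω = Σᵢ eᵢ ⊗ eᵢ`, so
`B^Γ = ½ ω ω^* + (1 - ε)/2 · 1 + ε (½ · 1 + Γ(v v^*))` and it remains to show `Γ(v v^*) ≥ -½`.
Reading `v` and `x` as `k × k` matrices `V`, `X`, one gets `⟨x, Γ(v v^*) x⟩ = tr (Cᴴ Cᵀ)` with
`C = Vᴴ X`, whose real part is at least `-‖C‖²`. Because `V` is antisymmetric,
`‖Vᴴ z‖² ≤ ½ ‖V‖² ‖z‖²`: antisymmetrising `‖W z‖² = Σ W_ij conj(y_i) z_j` (`y = W z`) and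
applying Cauchy–Schwarz leaves `Σ_ij |conj(y_i) z_j - conj(y_j) z_i|² ≤ 2 ‖y‖² ‖z‖²`
(Lagrange). Hence `‖C‖² ≤ ½ ‖X‖² = ½ ‖x‖²`.
-/

open Matrix Finset
open scoped ComplexOrder

/-- The right partial transpose: (X^Γ)_{(i,j),(k',l)} = X_{(i,l),(k',j)}. -/
def rpt {k : ℕ} (X : Matrix (Fin k × Fin k) (Fin k × Fin k) ℂ) :
    Matrix (Fin k × Fin k) (Fin k × Fin k) ℂ :=
  Matrix.of fun p q => X (p.1, q.2) (q.1, p.2)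

section

variable {ι : Type*} [Fintype ι]

lemma sum_norm_mul_sub_mul_sq_le (a b : ι → ℂ) :
    ∑ i, ∑ j, ‖a i * b j - a j * b i‖ ^ 2 ≤ 2 * (∑ i, ‖a i‖ ^ 2) * ∑ i, ‖b i‖ ^ 2 := by
  set s := ∑ i, a i * starRingEnd ℂ (b i)
  have hcross : ∑ i, ∑ j, a i * b j * starRingEnd ℂ (a j * b i) = s * starRingEnd ℂ s := by
    simp only [s, map_sum, Finset.sum_mul_sum, map_mul, Complex.conj_conj]
    exact Finset.sum_congr rfl fun i _ => Finset.sum_congr rfl fun j _ => by ring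
  have hcross_re : 0 ≤ ∑ i, ∑ j, (a i * b j * starRingEnd ℂ (a j * b i)).re := by
    simp only [← Complex.re_sum, hcross, Complex.mul_conj, Complex.ofReal_re]
    exact Complex.normSq_nonneg s
  have hswap : ∑ i, ∑ j, ‖a j * b i‖ ^ 2 = ∑ i, ∑ j, ‖a i * b j‖ ^ 2 := Finset.sum_comm
  have hprod : ∑ i, ∑ j, ‖a i * b j‖ ^ 2 = (∑ i, ‖a i‖ ^ 2) * ∑ i, ‖b i‖ ^ 2 := by
    simp only [norm_mul, mul_pow, Finset.sum_mul_sum]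
  simp only [Complex.sq_norm, Complex.normSq_sub, Finset.sum_sub_distrib,
    Finset.sum_add_distrib, ← Finset.mul_sum] at hswap hprod ⊢
  linarith

lemma two_mul_sum_norm_mulVec_sq_le_of_transpose_eq_neg (W : Matrix ι ι ℂ) (hW : Wᵀ = -W)
    (z : ι → ℂ) :
    2 * ∑ i, ‖(W *ᵥ z) i‖ ^ 2 ≤ (∑ i, ∑ j, ‖W i j‖ ^ 2) * ∑ i, ‖z i‖ ^ 2 := by
  set y := W *ᵥ z
  set Y := ∑ i, ‖y i‖ ^ 2
  set M : ι → ι → ℂ := fun i j => star (y i) * z j - star (y j) * z i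
  have hY : ((2 * Y : ℝ) : ℂ) = ∑ i, ∑ j, W i j * M i j := by
    have hT : (Y : ℂ) = ∑ i, ∑ j, W i j * (star (y i) * z j) := by
      rw [Complex.ofReal_sum]
      refine Finset.sum_congr rfl fun i _ => ?_
      rw [Complex.ofReal_pow, ← Complex.conj_mul', ← Complex.star_def]
      simp only [y, mulVec, dotProduct, Finset.mul_sum]
      exact Finset.sum_congr rfl fun j _ => by ring
    have hT' : ∑ i, ∑ j, W i j * (star (y j) * z i) = -∑ i, ∑ j, W i j * (star (y i) * z j) := by
      rw [Finset.sum_comm, ← Finset.sum_neg_distrib]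
      refine Finset.sum_congr rfl fun i _ => ?_
      rw [← Finset.sum_neg_distrib]
      refine Finset.sum_congr rfl fun j _ => ?_
      rw [← neg_mul, ← Matrix.neg_apply, ← hW, transpose_apply]
    simp only [M, mul_sub, Finset.sum_sub_distrib, hT', ← hT]
    push_cast
    ring
  have hYM : 2 * Y ≤ ∑ i, ∑ j, ‖W i j‖ * ‖M i j‖ := by
    calc 2 * Y = ‖((2 * Y : ℝ) : ℂ)‖ := by
          rw [Complex.norm_real, Real.norm_of_nonneg (by positivity)]
      _ ≤ ∑ i, ∑ j, ‖W i j * M i j‖ := by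
          rw [hY]
          exact (norm_sum_le _ _).trans (Finset.sum_le_sum fun i _ => norm_sum_le _ _)
      _ = ∑ i, ∑ j, ‖W i j‖ * ‖M i j‖ := by simp only [norm_mul]
  have hCS : (∑ i, ∑ j, ‖W i j‖ * ‖M i j‖) ^ 2
      ≤ (∑ i, ∑ j, ‖W i j‖ ^ 2) * ∑ i, ∑ j, ‖M i j‖ ^ 2 := by
    simpa only [Fintype.sum_prod_type] using Finset.sum_mul_sq_le_sq_mul_sq Finset.univ
      (fun p : ι × ι => ‖W p.1 p.2‖) (fun p => ‖M p.1 p.2‖)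
  have hM : ∑ i, ∑ j, ‖M i j‖ ^ 2 ≤ 2 * Y * ∑ i, ‖z i‖ ^ 2 := by
    simpa only [Pi.star_apply, norm_star] using sum_norm_mul_sub_mul_sq_le (star y) z
  have hS0 : 0 ≤ ∑ i, ∑ j, ‖W i j‖ ^ 2 := by positivity
  have hsq : (2 * Y) ^ 2 ≤ (∑ i, ∑ j, ‖W i j‖ ^ 2) * (2 * Y * ∑ i, ‖z i‖ ^ 2) :=
    (pow_le_pow_left₀ (by positivity) hYM 2).trans (hCS.trans (mul_le_mul_of_nonneg_left hM hS0))
  rcases (show 0 ≤ Y by positivity).eq_or_lt with hY0 | hY0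
  · rw [← hY0]
    simp only [mul_zero]
    positivity
  · nlinarith

lemma two_mul_sum_norm_mul_sq_le_of_transpose_eq_neg {κ : Type*} [Fintype κ] (W : Matrix ι ι ℂ)
    (hW : Wᵀ = -W) (X : Matrix ι κ ℂ) :
    2 * ∑ i, ∑ j, ‖(W * X) i j‖ ^ 2 ≤ (∑ i, ∑ j, ‖W i j‖ ^ 2) * ∑ i, ∑ j, ‖X i j‖ ^ 2 := by
  rw [Finset.sum_comm, Finset.mul_sum, Finset.sum_comm (f := fun i j => ‖X i j‖ ^ 2),
    Finset.mul_sum]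
  exact Finset.sum_le_sum fun j _ =>
    two_mul_sum_norm_mulVec_sq_le_of_transpose_eq_neg W hW fun i => X i j

lemma neg_sum_norm_sq_le_re_trace_conjTranspose_mul_transpose (C : Matrix ι ι ℂ) :
    -∑ i, ∑ j, ‖C i j‖ ^ 2 ≤ (trace (Cᴴ * Cᵀ)).re := by
  have hterm : ∀ i j, -(‖C j i‖ ^ 2 + ‖C i j‖ ^ 2) / 2 ≤ (star (C j i) * C i j).re :=
    fun i j => by
      have := (Complex.abs_re_le_norm (star (C j i) * C i j)).trans_eq
        (by rw [norm_mul, norm_star])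
      nlinarith [abs_le.mp this, sq_nonneg (‖C j i‖ - ‖C i j‖)]
  have hswap : ∑ i, ∑ j, ‖C j i‖ ^ 2 = ∑ i, ∑ j, ‖C i j‖ ^ 2 := Finset.sum_comm
  calc -∑ i, ∑ j, ‖C i j‖ ^ 2 = ∑ i, ∑ j, -(‖C j i‖ ^ 2 + ‖C i j‖ ^ 2) / 2 := by
        simp only [neg_div, Finset.sum_neg_distrib, add_div, Finset.sum_add_distrib,
          ← Finset.sum_div, hswap]
        ring
    _ ≤ ∑ i, ∑ j, (star (C j i) * C i j).re :=
        Finset.sum_le_sum fun i _ => Finset.sum_le_sum fun j _ => hterm i j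
    _ = (trace (Cᴴ * Cᵀ)).re := by
        simp only [trace, Matrix.diag, mul_apply, conjTranspose_apply, transpose_apply,
          Complex.re_sum]

lemma Matrix.IsHermitian.posSemidef_of_re_dotProduct_mulVec_nonneg {𝕜 : Type*} [RCLike 𝕜]
    {A : Matrix ι ι 𝕜} (hA : A.IsHermitian) (h : ∀ x, 0 ≤ RCLike.re (star x ⬝ᵥ A *ᵥ x)) :
    A.PosSemidef :=
  .of_dotProduct_mulVec_nonneg hA fun x =>
    RCLike.nonneg_iff.mpr ⟨h x, hA.im_star_dotProduct_mulVec_self x⟩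

lemma star_dotProduct_self_eq_sum_norm_sq (x : ι → ℂ) :
    star x ⬝ᵥ x = ((∑ i, ‖x i‖ ^ 2 : ℝ) : ℂ) := by
  push_cast
  exact Finset.sum_congr rfl fun i _ => Complex.conj_mul' (x i)

end

lemma flipOp_mulVec (k : ℕ) (x : Fin k × Fin k → ℂ) : flipOp k *ᵥ x = fun p => x p.swap := by
  ext ⟨a, b⟩
  simp [flipOp, mulVec, dotProduct, Fintype.sum_prod_type, ite_and]

lemma flipOp_conjTranspose (k : ℕ) : (flipOp k)ᴴ = flipOp k := by
  ext ⟨a, b⟩ ⟨c, d⟩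
  simp only [flipOp, conjTranspose_apply, of_apply, apply_ite star, star_one, star_zero]
  grind

lemma flipOp_mul_flipOp (k : ℕ) : flipOp k * flipOp k = 1 := by
  ext ⟨a, b⟩ ⟨c, d⟩
  simp [flipOp, mul_apply, one_apply, Fintype.sum_prod_type, ite_and]

lemma psym_posSemidef (k : ℕ) : (psym k).PosSemidef := by
  have h : psym k = (psym k)ᴴ * psym k := by
    simp only [psym, conjTranspose_smul, conjTranspose_add, conjTranspose_one,
      flipOp_conjTranspose, smul_mul_smul, add_mul, mul_add, flipOp_mul_flipOp, one_mul, mul_one,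
      star_div₀, star_one, star_ofNat]
    module
  rw [h]
  exact posSemidef_conjTranspose_mul_self _

section

variable {k : ℕ}

lemma rpt_add (X Y : Matrix (Fin k × Fin k) (Fin k × Fin k) ℂ) : rpt (X + Y) = rpt X + rpt Y :=
  rfl

lemma rpt_smul (c : ℂ) (X : Matrix (Fin k × Fin k) (Fin k × Fin k) ℂ) :
    rpt (c • X) = c • rpt X :=
  rfl

lemma rpt_one : rpt (1 : Matrix (Fin k × Fin k) (Fin k × Fin k) ℂ) = 1 := by
  ext ⟨a, b⟩ ⟨c, d⟩
  simp only [rpt, of_apply, one_apply, Prod.mk.injEq]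
  grind

/-- The unnormalised vector `Σᵢ eᵢ ⊗ eᵢ`. -/
def maxEntangledVec (k : ℕ) : Fin k × Fin k → ℂ := fun p => if p.1 = p.2 then 1 else 0

lemma rpt_flipOp :
    rpt (flipOp k) = vecMulVec (maxEntangledVec k) (star (maxEntangledVec k)) := by
  ext ⟨a, b⟩ ⟨c, d⟩
  simp only [rpt, flipOp, maxEntangledVec, of_apply, vecMulVec_apply, Pi.star_apply,
    apply_ite star, star_one, star_zero, mul_ite, ite_mul, one_mul, zero_mul]
  grind

lemma Matrix.IsHermitian.rpt {X : Matrix (Fin k × Fin k) (Fin k × Fin k) ℂ}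
    (hX : X.IsHermitian) : (rpt X).IsHermitian := by
  ext p q
  rw [conjTranspose_apply]
  exact congrFun (congrFun hX _) _

lemma star_dotProduct_rpt_vecMulVec_mulVec (v x : Fin k × Fin k → ℂ) :
    star x ⬝ᵥ rpt (vecMulVec v (star v)) *ᵥ x =
      trace (((of (Function.curry v))ᴴ * of (Function.curry x))ᴴ *
        ((of (Function.curry v))ᴴ * of (Function.curry x))ᵀ) := by
  simp only [dotProduct, mulVec, rpt, vecMulVec_apply, of_apply, trace, Matrix.diag, mul_apply,
    conjTranspose_apply, transpose_apply, Fintype.sum_prod_type, Finset.mul_sum, Finset.sum_mul,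
    star_sum, star_mul', star_star, Function.curry_apply, Pi.star_apply]
  rw [Finset.sum_comm]
  refine Finset.sum_congr rfl fun j _ => ?_
  rw [Finset.sum_comm_cycle]
  refine Finset.sum_congr rfl fun l _ => ?_
  rw [Finset.sum_comm]
  exact Finset.sum_congr rfl fun m _ => Finset.sum_congr rfl fun i _ => by ring

lemma posSemidef_smul_one_add_rpt_vecMulVec {v : Fin k × Fin k → ℂ} (hv : flipOp k *ᵥ v = -v) :
    ((((∑ p, ‖v p‖ ^ 2) / 2 : ℝ) : ℂ) • (1 : Matrix (Fin k × Fin k) (Fin k × Fin k) ℂ) +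
      rpt (vecMulVec v (star v))).PosSemidef := by
  set V := of (Function.curry v)
  have hV : Vᵀ = -V := by
    ext i j
    simpa [flipOp_mulVec, V] using congrFun hv (i, j)
  have hVH : Vᴴᵀ = -Vᴴ := by
    rw [← conjTranspose_transpose_eq_transpose_conjTranspose, hV, conjTranspose_neg]
  have hnormV : ∑ i, ∑ j, ‖Vᴴ i j‖ ^ 2 = ∑ p, ‖v p‖ ^ 2 := by
    simp only [conjTranspose_apply, norm_star, Fintype.sum_prod_type, V, of_apply,
      Function.curry_apply]
    exact Finset.sum_comm
  have hc : (0 : ℂ) ≤ (((∑ p, ‖v p‖ ^ 2) / 2 : ℝ) : ℂ) :=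
    Complex.zero_le_real.mpr (by positivity)
  refine ((PosSemidef.one.smul hc).isHermitian.add
    (posSemidef_vecMulVec_self_star v).isHermitian.rpt).posSemidef_of_re_dotProduct_mulVec_nonneg
    fun x => ?_
  set X := of (Function.curry x)
  have hnormX : ∑ i, ∑ j, ‖X i j‖ ^ 2 = ∑ p, ‖x p‖ ^ 2 := by
    simp only [Fintype.sum_prod_type, X, of_apply, Function.curry_apply]
  have hC := neg_sum_norm_sq_le_re_trace_conjTranspose_mul_transpose (Vᴴ * X)
  have hVX := two_mul_sum_norm_mul_sq_le_of_transpose_eq_neg Vᴴ hVH X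
  rw [hnormV, hnormX] at hVX
  rw [add_mulVec, dotProduct_add, smul_mulVec, one_mulVec, dotProduct_smul,
    star_dotProduct_self_eq_sum_norm_sq, star_dotProduct_rpt_vecMulVec_mulVec, smul_eq_mul,
    ← Complex.ofReal_mul, RCLike.re_to_complex, Complex.add_re, Complex.ofReal_re]
  linarith

end

theorem psym_plus_antisym_PPT_general (k : ℕ) (v : Fin k × Fin k → ℂ)
    (hv : ∑ p, Complex.normSq (v p) = 1)
    (hanti : (flipOp k).mulVec v = -v)
    (ε : ℝ) (hε0 : 0 ≤ ε) (hε : ε ≤ 1) :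
    (psym k + (ε : ℂ) • Matrix.vecMulVec v (star v)).PosSemidef ∧
    (rpt (psym k + (ε : ℂ) • Matrix.vecMulVec v (star v))).PosSemidef := by
  have hε0' : (0 : ℂ) ≤ ε := Complex.zero_le_real.mpr hε0
  refine ⟨(psym_posSemidef k).add ((posSemidef_vecMulVec_self_star v).smul hε0'), ?_⟩
  have hanti_psd := posSemidef_smul_one_add_rpt_vecMulVec hanti
  simp only [Complex.sq_norm, hv] at hanti_psd
  have hdecomp : rpt (psym k + (ε : ℂ) • vecMulVec v (star v)) =
      ((1 / 2 : ℝ) : ℂ) • vecMulVec (maxEntangledVec k) (star (maxEntangledVec k)) +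
        (((1 - ε) / 2 : ℝ) : ℂ) • 1 +
        (ε : ℂ) • (((1 / 2 : ℝ) : ℂ) • 1 + rpt (vecMulVec v (star v))) := by
    rw [psym, rpt_add, rpt_smul, rpt_add, rpt_one, rpt_flipOp, rpt_smul]
    push_cast
    module
  rw [hdecomp]
  exact (((posSemidef_vecMulVec_self_star _).smul (Complex.zero_le_real.mpr (by norm_num))).add
    (PosSemidef.one.smul (Complex.zero_le_real.mpr (by linarith)))).add (hanti_psd.smul hε0')

theorem psym_plus_antisym_PPT (k : ℕ) (hk : 2 ≤ k) (v : Fin k × Fin k → ℂ)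
    (hv : ∑ p, Complex.normSq (v p) = 1)
    (hanti : (flipOp k).mulVec v = -v)
    (ε : ℝ) (hε0 : 0 ≤ ε) (hε : ε ≤ 1) :
    (psym k + (ε : ℂ) • Matrix.vecMulVec v (star v)).PosSemidef ∧
    (rpt (psym k + (ε : ℂ) • Matrix.vecMulVec v (star v))).PosSemidef :=
  psym_plus_antisym_PPT_general k v hv hanti ε hε0 hε
end
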